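/- The Pogorelov map Φ : S³₁,₊ × S³₁,₊ → ℝ³ × ℝ³ is a topological embedding: it is injective, continuous, and a homeomorphism onto its image. -/

import Mathlib

noncomputable section

/-- The Minkowski bilinear form on `ℝ⁴`. -/
def mink (x y : Fin 4 → ℝ) : ℝ :=
  -(x 0 * y 0) + x 1 * y 1 + x 2 * y 2 + x 3 * y 3

/-- The projective (Klein) map `p(x) = (x₁, x₂, x₃)/x₀`. -/
def projMap (x : Fin 4 → ℝ) : EuclideanSpace ℝ (Fin 3) :=
  WithLp.toLp 2 ![x 1 / x 0, x 2 / x 0, x 3 / x 0]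

/-- First component `p₁ ∘ Φ` of the Pogorelov map:
`Φ(x,y) = (2(x₁,x₂,x₃)/(x₀+y₀), 2(y₁,y₂,y₃)/(x₀+y₀))`. -/
def phi1 (x y : Fin 4 → ℝ) : EuclideanSpace ℝ (Fin 3) :=
  WithLp.toLp 2 ![2 * x 1 / (x 0 + y 0), 2 * x 2 / (x 0 + y 0), 2 * x 3 / (x 0 + y 0)]

/-- Second component `p₂ ∘ Φ` of the Pogorelov map. -/
def phi2 (x y : Fin 4 → ℝ) : EuclideanSpace ℝ (Fin 3) :=
  WithLp.toLp 2 ![2 * y 1 / (x 0 + y 0), 2 * y 2 / (x 0 + y 0), 2 * y 3 / (x 0 + y 0)]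

/-- The upper de Sitter space `S³₁,₊`, as a subtype of `ℝ⁴`. -/
def DeSitterUp : Type := {x : Fin 4 → ℝ // mink x x = 1 ∧ 0 < x 0}

instance : TopologicalSpace DeSitterUp :=
  instTopologicalSpaceSubtype

/-- The Pogorelov map `Φ : S³₁,₊ × S³₁,₊ → ℝ³ × ℝ³`. -/
def pogorelovMap (q : DeSitterUp × DeSitterUp) :
    EuclideanSpace ℝ (Fin 3) × EuclideanSpace ℝ (Fin 3) :=
  (phi1 q.1.1 q.2.1, phi2 q.1.1 q.2.1)

namespace PogAux

abbrev E := EuclideanSpace ℝ (Fin 3)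

def nsq (u : E) : ℝ := u 0 ^ 2 + u 1 ^ 2 + u 2 ^ 2

lemma continuous_nsq : Continuous nsq := by
  have h : ∀ i : Fin 3, Continuous fun u : E => u i := fun i =>
    (continuous_apply i).comp (PiLp.continuous_ofLp 2 fun _ : Fin 3 => ℝ)
  exact (((h 0).pow 2).add ((h 1).pow 2)).add ((h 2).pow 2)

def afun (w : E × E) : ℝ := (4 + nsq w.1 - nsq w.2) / 8

lemma continuous_afun : Continuous afun := by
  exact (((continuous_const.add (continuous_nsq.comp continuous_fst)).sub
    (continuous_nsq.comp continuous_snd)).div_const 8)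

def tfun (w : E × E) : ℝ := nsq w.1 / 4 - afun w ^ 2

lemma continuous_tfun : Continuous tfun := by
  have h1 : Continuous fun w : E × E => nsq w.1 := continuous_nsq.comp continuous_fst
  exact (h1.div_const 4).sub (continuous_afun.pow 2)

def gmap (w : E × E) : (Fin 4 → ℝ) × (Fin 4 → ℝ) :=
  (![afun w / Real.sqrt (tfun w), w.1 0 / (2 * Real.sqrt (tfun w)),
     w.1 1 / (2 * Real.sqrt (tfun w)), w.1 2 / (2 * Real.sqrt (tfun w))],
   ![(1 - afun w) / Real.sqrt (tfun w), w.2 0 / (2 * Real.sqrt (tfun w)),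
     w.2 1 / (2 * Real.sqrt (tfun w)), w.2 2 / (2 * Real.sqrt (tfun w))])

section Algebra

variable {x y : Fin 4 → ℝ}

lemma nsq_phi1 (hx : mink x x = 1) (hs : x 0 + y 0 ≠ 0) :
    nsq (phi1 x y) = 4 * (1 + x 0 ^ 2) / (x 0 + y 0) ^ 2 := by
  have hx' : x 1 * x 1 + x 2 * x 2 + x 3 * x 3 = 1 + x 0 * x 0 := by
    have := hx; unfold mink at this; linarith
  simp only [nsq, phi1, PiLp.toLp_apply]
  simp only [Matrix.cons_val_zero, Matrix.cons_val_one, Matrix.head_cons,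
    Matrix.cons_val_two, Matrix.tail_cons]
  field_simp
  nlinarith [hx']

lemma nsq_phi2 (hy : mink y y = 1) (hs : x 0 + y 0 ≠ 0) :
    nsq (phi2 x y) = 4 * (1 + y 0 ^ 2) / (x 0 + y 0) ^ 2 := by
  have hy' : y 1 * y 1 + y 2 * y 2 + y 3 * y 3 = 1 + y 0 * y 0 := by
    have := hy; unfold mink at this; linarith
  simp only [nsq, phi2, PiLp.toLp_apply]
  simp only [Matrix.cons_val_zero, Matrix.cons_val_one, Matrix.head_cons,
    Matrix.cons_val_two, Matrix.tail_cons]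
  field_simp
  nlinarith [hy']

lemma afun_phi (hx : mink x x = 1) (hy : mink y y = 1) (hs : x 0 + y 0 ≠ 0) :
    afun (phi1 x y, phi2 x y) = x 0 / (x 0 + y 0) := by
  unfold afun
  rw [nsq_phi1 hx hs, nsq_phi2 hy hs]
  field_simp
  ring

lemma tfun_phi (hx : mink x x = 1) (hy : mink y y = 1) (hs : x 0 + y 0 ≠ 0) :
    tfun (phi1 x y, phi2 x y) = (1 / (x 0 + y 0)) ^ 2 := by
  unfold tfun
  rw [nsq_phi1 hx hs, afun_phi hx hy hs]
  field_simp
  ring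

lemma sqrt_tfun_phi (hx : mink x x = 1) (hy : mink y y = 1) (hs : 0 < x 0 + y 0) :
    Real.sqrt (tfun (phi1 x y, phi2 x y)) = 1 / (x 0 + y 0) := by
  rw [tfun_phi hx hy hs.ne']
  exact Real.sqrt_sq (by positivity)

lemma gmap_phi (hx : mink x x = 1) (hy : mink y y = 1) (hx0 : 0 < x 0) (hy0 : 0 < y 0) :
    gmap (phi1 x y, phi2 x y) = (x, y) := by
  have hs : 0 < x 0 + y 0 := by linarith
  have hr := sqrt_tfun_phi hx hy hs
  have ha := afun_phi hx hy hs.ne'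
  unfold gmap
  simp only [hr, ha, Prod.mk.injEq]
  refine ⟨?_, ?_⟩
  · funext i
    fin_cases i <;>
      simp [phi1, Matrix.cons_val_zero, Matrix.cons_val_one, Matrix.head_cons] <;>
      field_simp <;> ring
  · funext i
    fin_cases i <;>
      simp [phi2, Matrix.cons_val_zero, Matrix.cons_val_one, Matrix.head_cons] <;>
      field_simp <;> ring

end Algebra

lemma gmap_pogorelov (q : DeSitterUp × DeSitterUp) :
    gmap (pogorelovMap q) = (q.1.1, q.2.1) :=
  gmap_phi q.1.2.1 q.2.2.1 q.1.2.2 q.2.2.2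

lemma tfun_pogorelov_pos (q : DeSitterUp × DeSitterUp) :
    0 < tfun (pogorelovMap q) := by
  have hs : 0 < q.1.1 0 + q.2.1 0 := by
    have := q.1.2.2; have := q.2.2.2; linarith
  have := tfun_phi (x := q.1.1) (y := q.2.1) q.1.2.1 q.2.2.1 hs.ne'
  rw [pogorelovMap]
  rw [this]
  positivity

lemma continuous_pogorelov : Continuous pogorelovMap := by
  have hval1 : Continuous fun q : DeSitterUp × DeSitterUp => (q.1.1 : Fin 4 → ℝ) :=
    (continuous_subtype_val).comp continuous_fst
  have hval2 : Continuous fun q : DeSitterUp × DeSitterUp => (q.2.1 : Fin 4 → ℝ) :=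
    (continuous_subtype_val).comp continuous_snd
  have hden : Continuous fun q : DeSitterUp × DeSitterUp => q.1.1 0 + q.2.1 0 :=
    ((continuous_apply 0).comp hval1).add ((continuous_apply 0).comp hval2)
  have hdnz : ∀ q : DeSitterUp × DeSitterUp, q.1.1 0 + q.2.1 0 ≠ 0 := by
    intro q; have := q.1.2.2; have := q.2.2.2; positivity
  have key : ∀ (f : (DeSitterUp × DeSitterUp) → Fin 4 → ℝ), Continuous f →
      ∀ k : Fin 4, Continuous fun q => 2 * f q k / (q.1.1 0 + q.2.1 0) := by
    intro f hf k
    exact ((continuous_const.mul ((continuous_apply k).comp hf)).div hden hdnz)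
  apply Continuous.prodMk
  · apply (PiLp.continuous_toLp 2 fun _ : Fin 3 => ℝ).comp
    apply continuous_pi
    intro i
    fin_cases i
    · exact key _ hval1 1
    · exact key _ hval1 2
    · exact key _ hval1 3
  · apply (PiLp.continuous_toLp 2 fun _ : Fin 3 => ℝ).comp
    apply continuous_pi
    intro i
    fin_cases i
    · exact key _ hval2 1
    · exact key _ hval2 2
    · exact key _ hval2 3

def U : Set (E × E) := {w | 0 < tfun w}

lemma isOpen_U : IsOpen U := isOpen_lt continuous_const continuous_tfun

lemma continuousOn_gmap : ContinuousOn gmap U := by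
  have hrne : ∀ w ∈ U, Real.sqrt (tfun w) ≠ 0 := by
    intro w hw
    exact (Real.sqrt_pos.mpr hw).ne'
  have hr : ContinuousOn (fun w => Real.sqrt (tfun w)) U :=
    (Real.continuous_sqrt.comp continuous_tfun).continuousOn
  have happ1 : ∀ i : Fin 3, ContinuousOn (fun w : E × E => w.1 i) U :=
    fun i => (((continuous_apply i).comp
      ((PiLp.continuous_ofLp 2 fun _ : Fin 3 => ℝ).comp continuous_fst))).continuousOn
  have happ2 : ∀ i : Fin 3, ContinuousOn (fun w : E × E => w.2 i) U :=
    fun i => (((continuous_apply i).comp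
      ((PiLp.continuous_ofLp 2 fun _ : Fin 3 => ℝ).comp continuous_snd))).continuousOn
  have hr2 : ∀ w ∈ U, 2 * Real.sqrt (tfun w) ≠ 0 := by
    intro w hw
    have := hrne w hw
    positivity
  unfold gmap
  apply ContinuousOn.prodMk
  · apply continuousOn_pi.mpr
    intro i
    fin_cases i
    · exact (continuous_afun.continuousOn).div hr hrne
    · exact (happ1 0).div (hr.const_smul 2 |>.congr fun w _ => by simp [smul_eq_mul]) hr2
    · exact (happ1 1).div (hr.const_smul 2 |>.congr fun w _ => by simp [smul_eq_mul]) hr2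
    · exact (happ1 2).div (hr.const_smul 2 |>.congr fun w _ => by simp [smul_eq_mul]) hr2
  · apply continuousOn_pi.mpr
    intro i
    fin_cases i
    · exact ((continuousOn_const.sub continuous_afun.continuousOn)).div hr hrne
    · exact (happ2 0).div (hr.const_smul 2 |>.congr fun w _ => by simp [smul_eq_mul]) hr2
    · exact (happ2 1).div (hr.const_smul 2 |>.congr fun w _ => by simp [smul_eq_mul]) hr2
    · exact (happ2 2).div (hr.const_smul 2 |>.congr fun w _ => by simp [smul_eq_mul]) hr2

end PogAux

open PogAux in
/-- The Pogorelov map is a topological embedding: injective, continuous and a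
homeomorphism onto its image. -/
theorem pogorelovMap_isEmbedding :
    Function.Injective pogorelovMap ∧ Continuous pogorelovMap ∧
      Topology.IsEmbedding pogorelovMap := by
  have hinj : Function.Injective pogorelovMap := by
    intro q q' h
    have := congrArg gmap h
    rw [gmap_pogorelov, gmap_pogorelov] at this
    have h1 : q.1.1 = q'.1.1 := congrArg Prod.fst this
    have h2 : q.2.1 = q'.2.1 := congrArg Prod.snd this
    exact Prod.ext (Subtype.ext h1) (Subtype.ext h2)
  have hcont := continuous_pogorelov
  refine ⟨hinj, hcont, ?_⟩
  -- corestrict to U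
  let f' : DeSitterUp × DeSitterUp → U := fun q => ⟨pogorelovMap q, tfun_pogorelov_pos q⟩
  have hf' : Continuous f' := hcont.subtype_mk _
  let g' : U → (Fin 4 → ℝ) × (Fin 4 → ℝ) := fun w => gmap w.1
  have hg' : Continuous g' :=
    continuousOn_iff_continuous_restrict.mp continuousOn_gmap
  have hι : Topology.IsEmbedding fun q : DeSitterUp × DeSitterUp => ((q.1.1, q.2.1) : (Fin 4 → ℝ) × (Fin 4 → ℝ)) := by
    exact (Topology.IsEmbedding.subtypeVal.prodMap Topology.IsEmbedding.subtypeVal)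
  have hcomp : g' ∘ f' = fun q : DeSitterUp × DeSitterUp => ((q.1.1, q.2.1) : (Fin 4 → ℝ) × (Fin 4 → ℝ)) := by
    funext q
    exact gmap_pogorelov q
  have hind : Topology.IsInducing f' := by
    apply Topology.IsInducing.of_comp hf' hg'
    rw [hcomp]
    exact hι.toIsInducing
  have hembf' : Topology.IsEmbedding f' :=
    ⟨hind, fun a b h => hinj (congrArg Subtype.val h)⟩
  have : pogorelovMap = Subtype.val ∘ f' := rfl
  rw [this]
  exact Topology.IsEmbedding.subtypeVal.comp hembf'
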